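/- Let d ∈ ℕ, d ≥ 1, let α > 9/2 be real, and let v̂ : ℤ^d → ℂ satisfy ‖v̂‖_α := (Σ_{h ∈ ℤ^d} |v̂(h)|² r_α(h)²)^{1/2} < ∞. Then Σ_{h ∈ ℤ^d} ‖h‖₂⁴ |v̂(h)| ≤ d² · (1 + 2ζ(2α − 8))^{d/2} · ‖v̂‖_α, where ‖h‖₂ is the Euclidean norm of h; in particular the left-hand side is finite. -/

import Mathlib

noncomputable section

/-- The squared Korobov weight `r_α(h)² = ∏_j max(|h_j|^(2α), 1)`. -/
def korWeightSq {d : ℕ} (α : ℝ) (h : Fin d → ℤ) : ℝ :=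
  ∏ j, max (|(h j : ℝ)| ^ (2 * α)) 1

/-- The squared Euclidean norm `‖h‖₂² = Σ_j h_j²` of `h ∈ ℤ^d`. -/
def normSq {d : ℕ} (h : Fin d → ℤ) : ℝ := ∑ j, (h j : ℝ) ^ 2

/-- The Riemann zeta function at a real argument `s`, `ζ(s) = Σ_{m ≥ 1} m^{-s}`. -/
def zetaR (s : ℝ) : ℝ := ∑' m : ℕ, 1 / ((m : ℝ) + 1) ^ s

/-!
Write `‖h‖₂⁴ |v̂(h)| = (‖h‖₂⁴ / r_α(h)) · (|v̂(h)| r_α(h))` and apply Cauchy–Schwarz: the second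
factor has ℓ²-norm `‖v̂‖_α`, so it remains to bound `Σ_h ‖h‖₂⁸ / r_α(h)²`. By the power-mean
inequality `‖h‖₂⁸ ≤ d³ Σ_j h_j⁸`, and for each `j` the sum `Σ_h h_j⁸ / r_α(h)²` factorizes over the
coordinates into one-dimensional sums `Σ_n |n|^k / max(|n|^{2α}, 1) = 0^k + 2ζ(2α − k)`
(`k ∈ {0, 8}`), each at most `1 + 2ζ(2α − 8)` since `ζ` is decreasing.
-/

theorem hasSum_fin_pi_prod_of_nonneg {β : Type*} {d : ℕ} {f : Fin d → β → ℝ} {a : Fin d → ℝ}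
    (hf : ∀ j, HasSum (f j) (a j)) (hf₀ : ∀ j b, 0 ≤ f j b) :
    HasSum (fun x : Fin d → β => ∏ j, f j (x j)) (∏ j, a j) := by
  induction d with
  | zero => simp
  | succ d ih =>
    have htail := ih (fun j => hf j.succ) (fun j => hf₀ j.succ)
    -- `(e :)` elaborates without the expected type: unifying `g x.2` with the product times out
    have hsplit := (hf 0).mul htail ((hf 0).summable.mul_of_nonneg htail.summable (hf₀ 0)
      fun x => Finset.prod_nonneg fun j _ => hf₀ j.succ (x j) :)
    rw [Fin.prod_univ_succ]
    refine (Fin.consEquiv fun _ => β).hasSum_iff.mp (hsplit.congr_fun fun p => ?_)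
    simp [Fin.prod_univ_succ, Fin.consEquiv]

theorem summable_and_tsum_mul_le_sqrt_mul_sqrt {ι : Type*} {a b w : ι → ℝ} (ha : ∀ i, 0 ≤ a i)
    (hb : ∀ i, 0 ≤ b i) (hw : ∀ i, 0 < w i) (haw : Summable fun i => a i ^ 2 / w i)
    (hbw : Summable fun i => b i ^ 2 * w i) :
    Summable (fun i => a i * b i) ∧
      ∑' i, a i * b i ≤ √(∑' i, a i ^ 2 / w i) * √(∑' i, b i ^ 2 * w i) := by
  have hf : ∀ i, (a i / √(w i)) ^ (2 : ℝ) = a i ^ 2 / w i := fun i => by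
    rw [Real.rpow_two, div_pow, Real.sq_sqrt (hw i).le]
  have hg : ∀ i, (b i * √(w i)) ^ (2 : ℝ) = b i ^ 2 * w i := fun i => by
    rw [Real.rpow_two, mul_pow, Real.sq_sqrt (hw i).le]
  have hfg : ∀ i, a i / √(w i) * (b i * √(w i)) = a i * b i := fun i => by
    field_simp [(Real.sqrt_pos.2 (hw i)).ne']
  have := Real.summable_and_inner_le_Lp_mul_Lq_tsum_of_nonneg .two_two
    (fun i => div_nonneg (ha i) (Real.sqrt_nonneg _))
    (fun i => mul_nonneg (hb i) (Real.sqrt_nonneg _))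
    (haw.congr fun i => (hf i).symm) (hbw.congr fun i => (hg i).symm)
  simp only [hf, hg, hfg, ← Real.sqrt_eq_rpow] at this
  exact this

theorem zetaR_nonneg (s : ℝ) : 0 ≤ zetaR s :=
  tsum_nonneg fun m => by positivity

theorem hasSum_zetaR {s : ℝ} (hs : 1 < s) :
    HasSum (fun m : ℕ => 1 / ((m : ℝ) + 1) ^ s) (zetaR s) :=
  Summable.hasSum <| by
    simpa only [Nat.cast_add, Nat.cast_one] using
      (summable_nat_add_iff 1).2 (Real.summable_one_div_nat_rpow.2 hs)

theorem zetaR_le_zetaR {a b : ℝ} (ha : 1 < a) (hab : a ≤ b) : zetaR b ≤ zetaR a := by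
  refine hasSum_le (fun m => ?_) (hasSum_zetaR (ha.trans_le hab)) (hasSum_zetaR ha)
  gcongr
  linarith [(m.cast_nonneg : (0 : ℝ) ≤ m)]

theorem hasSum_int_of_eq_abs_rpow_neg {s : ℝ} (hs : 1 < s) {f : ℤ → ℝ}
    (hf : ∀ n ≠ 0, f n = |(n : ℝ)| ^ (-s)) : HasSum f (f 0 + 2 * zetaR s) := by
  have hpos : ∀ n : ℕ, f (n + 1) = 1 / ((n : ℝ) + 1) ^ s := fun n => by
    rw [hf _ (by omega), Real.rpow_neg (abs_nonneg _), one_div]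
    push_cast
    rw [abs_of_nonneg (by positivity)]
  have hneg : ∀ n : ℕ, f (-(n + 1)) = 1 / ((n : ℝ) + 1) ^ s := fun n => by
    rw [hf _ (by omega), Real.rpow_neg (abs_nonneg _), one_div]
    push_cast
    rw [abs_neg, abs_of_nonneg (by positivity)]
  convert ((hasSum_zetaR hs).congr_fun hpos).of_add_one_of_neg_add_one
    ((hasSum_zetaR hs).congr_fun hneg) using 1
  ring

theorem hasSum_abs_pow_div_max_rpow {α : ℝ} {k : ℕ} (hk : (k : ℝ) + 1 < 2 * α) :
    HasSum (fun n : ℤ => |(n : ℝ)| ^ k / max (|(n : ℝ)| ^ (2 * α)) 1)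
      (0 ^ k + 2 * zetaR (2 * α - k)) := by
  have hα : 0 < 2 * α := by linarith [(k.cast_nonneg : (0 : ℝ) ≤ k)]
  convert hasSum_int_of_eq_abs_rpow_neg (s := 2 * α - k) (by linarith) fun n hn => ?_ using 2
  · simp [Real.zero_rpow hα.ne']
  · have hn : 1 ≤ |(n : ℝ)| := by exact_mod_cast Int.one_le_abs hn
    rw [max_eq_left (Real.one_le_rpow hn hα.le), ← Real.rpow_natCast,
      ← Real.rpow_sub (by positivity), neg_sub]

theorem korWeightSq_pos {d : ℕ} (α : ℝ) (h : Fin d → ℤ) : 0 < korWeightSq α h :=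
  Finset.prod_pos fun _ _ => lt_max_of_lt_right one_pos

theorem summable_and_tsum_abs_pow_div_korWeightSq_le {d : ℕ} {α : ℝ} {k : ℕ}
    (hk : (k : ℝ) + 1 < 2 * α) (j : Fin d) :
    Summable (fun h : Fin d → ℤ => |(h j : ℝ)| ^ k / korWeightSq α h) ∧
      ∑' h : Fin d → ℤ, |(h j : ℝ)| ^ k / korWeightSq α h ≤ (1 + 2 * zetaR (2 * α - k)) ^ d := by
  set e : Fin d → ℕ := fun i => if i = j then k else 0
  have he : ∀ i, (e i : ℝ) + 1 < 2 * α := fun i => by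
    by_cases hi : i = j <;> simp [e, hi] <;> linarith [(k.cast_nonneg : (0 : ℝ) ≤ k)]
  have hprod := hasSum_fin_pi_prod_of_nonneg (fun i => hasSum_abs_pow_div_max_rpow (he i))
    fun i n => by positivity
  have hfactor : ∀ h : Fin d → ℤ, ∏ i, |(h i : ℝ)| ^ e i / max (|(h i : ℝ)| ^ (2 * α)) 1 =
      |(h j : ℝ)| ^ k / korWeightSq α h := fun h => by
    rw [Finset.prod_div_distrib, Fintype.prod_eq_single j fun i hi => by simp [e, hi]]
    simp [e, korWeightSq]
  simp only [hfactor] at hprod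
  refine ⟨hprod.summable, hprod.tsum_eq ▸ ?_⟩
  rw [← Fin.prod_const]
  refine Finset.prod_le_prod (fun i _ => by positivity [zetaR_nonneg (2 * α - e i)]) fun i _ => ?_
  gcongr
  · exact pow_le_one₀ (le_refl (0 : ℝ)) zero_le_one
  · refine zetaR_le_zetaR (by linarith) ?_
    by_cases hi : i = j <;> simp [e, hi]

theorem normSq_pow_succ_le {d : ℕ} (h : Fin d → ℤ) (n : ℕ) :
    normSq h ^ (n + 1) ≤ (d : ℝ) ^ n * ∑ j, |(h j : ℝ)| ^ (2 * (n + 1)) := by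
  have := pow_sum_le_card_mul_sum_pow (s := Finset.univ)
    (f := fun j => (h j : ℝ) ^ 2) (fun j _ => sq_nonneg _) n
  simpa [normSq, ← pow_mul, (even_two_mul _).pow_abs] using this

theorem summable_and_tsum_normSq_pow_div_korWeightSq_le {d n : ℕ} {α : ℝ}
    (hα : (2 * (n + 1) : ℕ) + 1 < 2 * α) :
    Summable (fun h : Fin d → ℤ => normSq h ^ (n + 1) / korWeightSq α h) ∧
      ∑' h : Fin d → ℤ, normSq h ^ (n + 1) / korWeightSq α h ≤
        (d : ℝ) ^ (n + 1) * (1 + 2 * zetaR (2 * α - (2 * (n + 1) : ℕ))) ^ d := by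
  have hcoord := summable_and_tsum_abs_pow_div_korWeightSq_le (d := d) hα
  set k := 2 * (n + 1)
  have hmajorant : Summable fun h : Fin d → ℤ =>
      (d : ℝ) ^ n * ∑ j, |(h j : ℝ)| ^ k / korWeightSq α h :=
    (summable_sum fun j _ => (hcoord j).1).mul_left _
  have hle : ∀ h : Fin d → ℤ, normSq h ^ (n + 1) / korWeightSq α h ≤
      (d : ℝ) ^ n * ∑ j, |(h j : ℝ)| ^ k / korWeightSq α h := fun h => by
    rw [← Finset.sum_div, ← mul_div_assoc]
    exact div_le_div_of_nonneg_right (normSq_pow_succ_le h n) (korWeightSq_pos α h).le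
  have hsummable := hmajorant.of_nonneg_of_le
    (fun h => div_nonneg (pow_nonneg (Finset.sum_nonneg fun _ _ => sq_nonneg _) _)
      (korWeightSq_pos α h).le) hle
  refine ⟨hsummable, (hsummable.tsum_le_tsum hle hmajorant).trans ?_⟩
  rw [tsum_mul_left, Summable.tsum_finsetSum fun j _ => (hcoord j).1, pow_succ, mul_assoc]
  gcongr
  simpa using Finset.sum_le_sum fun j (_ : j ∈ Finset.univ) => (hcoord j).2

theorem korobov_weighted_sum_fourth
    (d : ℕ) (α : ℝ) (hα : 9 / 2 < α)
    (vhat : (Fin d → ℤ) → ℂ)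
    (hsum : Summable fun h : Fin d → ℤ => ‖vhat h‖ ^ 2 * korWeightSq α h) :
    Summable (fun h : Fin d → ℤ => normSq h ^ 2 * ‖vhat h‖) ∧
    ∑' h : Fin d → ℤ, normSq h ^ 2 * ‖vhat h‖ ≤
      (d : ℝ) ^ 2 * (1 + 2 * zetaR (2 * α - 8)) ^ ((d : ℝ) / 2) *
        Real.sqrt (∑' h : Fin d → ℤ, ‖vhat h‖ ^ 2 * korWeightSq α h) := by
  obtain ⟨hmoment, hmoment_le⟩ :=
    summable_and_tsum_normSq_pow_div_korWeightSq_le (d := d) (n := 3) (by norm_num; linarith)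
  norm_num at hmoment_le
  have hC : 0 ≤ 1 + 2 * zetaR (2 * α - 8) := by positivity [zetaR_nonneg (2 * α - 8)]
  obtain ⟨hsummable, hle⟩ := summable_and_tsum_mul_le_sqrt_mul_sqrt
    (fun h => sq_nonneg (normSq h)) (fun h => norm_nonneg (vhat h)) (korWeightSq_pos α)
    (by simpa only [← pow_mul] using hmoment) hsum
  refine ⟨hsummable, hle.trans ?_⟩
  gcongr
  calc √(∑' h : Fin d → ℤ, (normSq h ^ 2) ^ 2 / korWeightSq α h)
      ≤ √((d : ℝ) ^ 4 * (1 + 2 * zetaR (2 * α - 8)) ^ d) := by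
        simpa only [← pow_mul] using Real.sqrt_le_sqrt hmoment_le
    _ = (d : ℝ) ^ 2 * (1 + 2 * zetaR (2 * α - 8)) ^ ((d : ℝ) / 2) := by
      rw [Real.sqrt_mul (by positivity)]
      congr 1
      · rw [show 4 = 2 * 2 from rfl, pow_mul, Real.sqrt_sq (by positivity)]
      · rw [Real.sqrt_eq_rpow, ← Real.rpow_natCast, ← Real.rpow_mul hC]
        ring_nf

end
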